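/- arXiv:math/0309182 — 2 statements merged into one kernel-verified Lean document; each statement's English description precedes it below -/
import Mathlib

section
/- Assume n ≥ 2 and that for every k ∈ Λ_n with k ∼ 0: b((1−ρ)/(ρ·γ_k) + 1) − a(1 + (ρ/(1−ρ))·γ_k) ≥ 1 − γ_k/γ_0 and a(1 + ρ/((1−ρ)·γ_k)) − b(((1−ρ)/ρ)·γ_k + 1) ≥ 1 − γ_k/γ_0, where γ_0 := 1/(1+C). Let ψ(η) = Π_{i∈Λ_n\{0}} γ_i^{η(i)} and ψ′(η) = Π_{i∈Λ_n\{0}} γ_i^{−η(i)}. Then η ↦ (L*ψ)(η)/ψ(η) is increasing on Ω_n* and η ↦ (L*ψ′)(η)/ψ′(η) is decreasing on Ω_n*. -/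
open scoped Classical
noncomputable section

/-- `Λ_n = [-n,n]^d ∩ ℤ^d`. -/
def Lam (d n : ℕ) : Finset (Fin d → ℤ) :=
  Finset.Icc (fun _ => -(n : ℤ)) (fun _ => (n : ℤ))

/-- The nearest-neighbor relation on `ℤ^d`. -/
def Nbr {d : ℕ} (i j : Fin d → ℤ) : Prop := ∑ k, |i k - j k| = 1

/-- The sites of `Λ_n \ {0}`. -/
abbrev SiteS (d n : ℕ) := {i : Fin d → ℤ // i ∈ (Lam d n).erase 0}

/-- `Ω_n^* = {0,1}^{Λ_n \ {0}}` (with `Bool` for `{0,1}`, ordered by `false < true`). -/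
abbrev ConfS (d n : ℕ) := SiteS d n → Bool

/-- `T^{i,j}η` exchanges the coordinates `i` and `j` of `η`. -/
def exchS {d n : ℕ} (i j : SiteS d n) (η : ConfS d n) : ConfS d n :=
  fun k => if k = i then η j else if k = j then η i else η k

/-- `σ^k η` flips the coordinate `k` of `η`. -/
def flpS {d n : ℕ} (i : SiteS d n) (η : ConfS d n) : ConfS d n :=
  fun k => if k = i then !(η k) else η k

/-- `n(i) = #{j ∉ Λ_n : j ∼ i}` (each site of `ℤ^d` has exactly `2d` neighbors). -/
def nOutS {d n : ℕ} (i : SiteS d n) : ℤ :=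
  2 * d - ((Lam d n).filter (fun j => Nbr i.1 j)).card

/-- `κ = √((1-ρ)/ρ)`. -/
def kap (ρ : ℝ) : ℝ := Real.sqrt ((1 - ρ) / ρ)

/-- `κ^{2η(i)-1}`. -/
def bdRateS {d n : ℕ} (ρ : ℝ) (η : ConfS d n) (i : SiteS d n) : ℝ :=
  kap ρ ^ (2 * (if η i then (1 : ℤ) else 0) - 1)

/-- `L_0`: the exchange and boundary-flip terms (the sum over bonds `i ∼ j` with
`i, j ∈ Λ_n \ {0}` is written as half the sum over ordered pairs). -/
def Lzero {d n : ℕ} (ρ : ℝ) (φ : ConfS d n → ℝ) (η : ConfS d n) : ℝ :=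
  (∑ i : SiteS d n, ∑ j : SiteS d n,
      if Nbr i.1 j.1 then φ (exchS i j η) - φ η else 0) / 2
  + ∑ i : SiteS d n, (nOutS i : ℝ) * bdRateS ρ η i * (φ (flpS i η) - φ η)

/-- The generator of SSEP with birth (rate `b`) and death (rate `a`) at the
neighbors of the origin:
`L_{ab}φ(η) = L_0φ(η) + Σ_{k∼0}(aη(k) + b(1−η(k)))(φ(σ^kη) − φ(η))`. -/
def Lab {d n : ℕ} (ρ a b : ℝ) (φ : ConfS d n → ℝ) (η : ConfS d n) : ℝ :=
  Lzero ρ φ η +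
    ∑ k : SiteS d n,
      if Nbr (0 : Fin d → ℤ) k.1 then
        (a * (if η k then 1 else 0) + b * (if η k then 0 else 1)) *
          (φ (flpS k η) - φ η)
      else 0

/-- `L*`, the adjoint of `L_{ab}` in `L²(ν_ρ)`:
`L*f(η) = L_0 f(η) + Σ_{k∼0}[(1−η(k))((aρ/(1−ρ))f(σ^kη) − b f(η))
+ η(k)((b(1−ρ)/ρ)f(σ^kη) − a f(η))]`. -/
def Lstar {d n : ℕ} (ρ a b : ℝ) (f : ConfS d n → ℝ) (η : ConfS d n) : ℝ :=
  Lzero ρ f η +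
    ∑ k : SiteS d n,
      if Nbr (0 : Fin d → ℤ) k.1 then
        (if η k then 0 else 1) * (a * ρ / (1 - ρ) * f (flpS k η) - b * f η) +
          (if η k then 1 else 0) * (b * (1 - ρ) / ρ * f (flpS k η) - a * f η)
      else 0

/-- The product Bernoulli(`ρ`) measure on `Ω_n^*`. -/
def nuRhoS {d n : ℕ} (ρ : ℝ) (η : ConfS d n) : ℝ :=
  ∏ i, if η i then ρ else 1 - ρ

/-- The set of nearest neighbors of `i` in `ℤ^d`, as a finset. -/
def nbrFinset {d : ℕ} (i : Fin d → ℤ) : Finset (Fin d → ℤ) :=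
  (Finset.Icc (i - 1) (i + 1)).filter (fun j => Nbr i j)

/-- `γ_i = 1/(1 + C h(i))`. -/
def gam (C : ℝ) {d : ℕ} (h : (Fin d → ℤ) → ℝ) (i : Fin d → ℤ) : ℝ :=
  1 / (1 + C * h i)

/-- `ψ(η) = Π_{i ∈ Λ_n \ {0}} γ_i^{η(i)}`. -/
def psiS (C : ℝ) {d n : ℕ} (h : (Fin d → ℤ) → ℝ) (η : ConfS d n) : ℝ :=
  ∏ i : SiteS d n, if η i then gam C h i.1 else 1

/-- `ψ'(η) = Π_{i ∈ Λ_n \ {0}} γ_i^{−η(i)}`. -/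
def psiS' (C : ℝ) {d n : ℕ} (h : (Fin d → ℤ) → ℝ) (η : ConfS d n) : ℝ :=
  ∏ i : SiteS d n, if η i then (gam C h i.1)⁻¹ else 1

namespace LstarAux


lemma nbr_symm {d : ℕ} {i j : Fin d → ℤ} (hij : Nbr i j) : Nbr j i := by
  unfold Nbr at *
  simpa [abs_sub_comm] using hij

lemma nbr_irrefl {d : ℕ} (i : Fin d → ℤ) : ¬ Nbr i i := by
  simp [Nbr]

lemma nbr_single {d : ℕ} {i j : Fin d → ℤ} (hij : Nbr i j) :
    ∃ l, |i l - j l| = 1 ∧ ∀ m, m ≠ l → i m = j m := by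
  classical
  by_cases hall : ∀ l, i l = j l
  · exfalso; unfold Nbr at hij; simp [hall] at hij
  push_neg at hall
  obtain ⟨l, hl⟩ := hall
  have h1 : 1 ≤ |i l - j l| := by
    have : i l - j l ≠ 0 := sub_ne_zero.mpr hl
    exact Int.one_le_abs this
  have hsplit : |i l - j l| + ∑ m ∈ Finset.univ.erase l, |i m - j m| = 1 := by
    have := Finset.add_sum_erase Finset.univ (fun m => |i m - j m|) (Finset.mem_univ l)
    rw [this]; exact hij
  have hnn : (0:ℤ) ≤ ∑ m ∈ Finset.univ.erase l, |i m - j m| :=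
    Finset.sum_nonneg fun m _ => abs_nonneg _
  have habs : |i l - j l| = 1 := le_antisymm (by omega) h1
  have hz : ∑ m ∈ Finset.univ.erase l, |i m - j m| = 0 := by omega
  refine ⟨l, habs, fun m hm => ?_⟩
  have h0 := (Finset.sum_eq_zero_iff_of_nonneg (fun m _ => abs_nonneg (i m - j m))).1 hz m
    (Finset.mem_erase.mpr ⟨hm, Finset.mem_univ m⟩)
  have : i m - j m = 0 := abs_eq_zero.mp h0
  omega

lemma nbr_mem_Icc {d : ℕ} {i j : Fin d → ℤ} (hij : Nbr i j) :
    j ∈ Finset.Icc (i - 1) (i + 1) := by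
  obtain ⟨l, hl, hm⟩ := nbr_single hij
  have hl' : i l - j l = 1 ∨ i l - j l = -1 := abs_eq (by norm_num : (0:ℤ) ≤ 1) |>.mp hl
  rw [Finset.mem_Icc]
  constructor <;> intro m <;> by_cases hml : m = l
  · subst hml; simp only [Pi.sub_apply, Pi.one_apply]; omega
  · have := hm m hml; simp only [Pi.sub_apply, Pi.one_apply]; omega
  · subst hml; simp only [Pi.add_apply, Pi.one_apply]; omega
  · have := hm m hml; simp only [Pi.add_apply, Pi.one_apply]; omega

lemma nbr_card_le {d n : ℕ} (i : Fin d → ℤ) :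
    ((Lam d n).filter (fun j => Nbr i j)).card ≤ 2 * d := by
  classical
  have hsub : ((Lam d n).filter (fun j => Nbr i j)) ⊆
      Finset.image (fun p : Fin d × Bool =>
        Function.update i p.1 (i p.1 + if p.2 then 1 else -1)) Finset.univ := by
    intro j hj
    have hnbr : Nbr i j := (Finset.mem_filter.mp hj).2
    obtain ⟨l, hl, hm⟩ := nbr_single hnbr
    have hl' : i l - j l = 1 ∨ i l - j l = -1 := abs_eq (by norm_num : (0:ℤ) ≤ 1) |>.mp hl
    refine Finset.mem_image.mpr ⟨⟨l, decide (j l = i l + 1)⟩, Finset.mem_univ _, ?_⟩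
    funext m
    by_cases hml : m = l
    · subst hml
      simp only [Function.update_self]
      rcases hl' with h1 | h1
      · have hd : ¬ (j m = i m + 1) := by omega
        simp [hd]
        omega
      · have hd : j m = i m + 1 := by omega
        simp [hd]
    · rw [Function.update_of_ne hml]
      exact hm m hml
  calc ((Lam d n).filter (fun j => Nbr i j)).card ≤ _ := Finset.card_le_card hsub
    _ ≤ (Finset.univ : Finset (Fin d × Bool)).card := Finset.card_image_le
    _ = 2 * d := by simp [Finset.card_univ]; ring

lemma zero_mem_Lam {d n : ℕ} (hn : 1 ≤ n) : (0 : Fin d → ℤ) ∈ Lam d n := by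
  rw [Lam, Finset.mem_Icc]
  constructor <;> intro m <;> simp <;> omega



lemma monotone_of_flip {ι : Type*} [Fintype ι] [DecidableEq ι] {f : (ι → Bool) → ℝ}
    (hf : ∀ η k, f (Function.update η k false) ≤ f (Function.update η k true)) :
    Monotone f := by
  intro η ξ hle
  have key : ∀ s : Finset ι, f η ≤ f (fun k => if k ∈ s then ξ k else η k) := by
    intro s
    induction s using Finset.induction_on with
    | empty => simp
    | @insert j s hj ih =>
      set ζ : ι → Bool := fun k => if k ∈ s then ξ k else η k with hζ
      have heq : (fun k => if k ∈ insert j s then ξ k else η k) = Function.update ζ j (ξ j) := by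
        funext k
        by_cases hk : k = j
        · subst hk; simp [Function.update_self]
        · rw [Function.update_of_ne hk]
          simp [Finset.mem_insert, hk, hζ]
      rw [heq]
      by_cases hej : η j = ξ j
      · have : Function.update ζ j (ξ j) = ζ := by
          have : ζ j = ξ j := by simp [hζ, hj, hej]
          rw [← this, Function.update_eq_self]
        rw [this]; exact ih
      · have hηj : η j = false ∧ ξ j = true := by
          have := hle j
          revert this hej
          cases η j <;> cases ξ j <;> simp
        have hζj : ζ j = false := by simp [hζ, hj, hηj.1]
        calc f η ≤ f ζ := ih
          _ = f (Function.update ζ j false) := by rw [← hζj, Function.update_eq_self]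
          _ ≤ f (Function.update ζ j true) := hf ζ j
          _ = f (Function.update ζ j (ξ j)) := by rw [hηj.2]
  have := key Finset.univ
  simpa using this

lemma antitone_of_flip {ι : Type*} [Fintype ι] [DecidableEq ι] {f : (ι → Bool) → ℝ}
    (hf : ∀ η k, f (Function.update η k true) ≤ f (Function.update η k false)) :
    Antitone f := by
  intro η ξ hle
  have := monotone_of_flip (f := fun η => -f η) (fun η k => neg_le_neg (hf η k)) hle
  simpa using this



section PsiLemmas
variable {d n : ℕ}

lemma ite_one_pos {x : Bool} {c : ℝ} (hc : 0 < c) : 0 < (if x then c else 1) := by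
  cases x <;> simp [hc]

/-- generic weight product -/
def Psi (w : SiteS d n → ℝ) (η : ConfS d n) : ℝ := ∏ i, if η i then w i else 1

def Gp (w : SiteS d n → ℝ) (i : SiteS d n) (x : Bool) : ℝ := if x then (w i)⁻¹ else w i

def Ef (w : SiteS d n → ℝ) (i j : SiteS d n) (x y : Bool) : ℝ :=
  ((if y then w i else 1) * (if x then w j else 1)) /
  ((if x then w i else 1) * (if y then w j else 1)) - 1

def Ow (ρ a b : ℝ) (w : SiteS d n → ℝ) (k : SiteS d n) (x : Bool) : ℝ :=
  if x then b * (1 - ρ) / ρ * (w k)⁻¹ - a else a * ρ / (1 - ρ) * (w k) - b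

def Sfun (ρ a b : ℝ) (w : SiteS d n → ℝ) (η : ConfS d n) : ℝ :=
  (∑ i : SiteS d n, ∑ j : SiteS d n, if Nbr i.1 j.1 then Ef w i j (η i) (η j) else 0) / 2
  + ∑ i : SiteS d n, (nOutS i : ℝ) * bdRateS ρ η i * (Gp w i (η i) - 1)
  + ∑ k : SiteS d n, if Nbr (0 : Fin d → ℤ) k.1 then Ow ρ a b w k (η k) else 0

lemma psi_pos {w : SiteS d n → ℝ} (hw : ∀ i, 0 < w i) (η : ConfS d n) : 0 < Psi w η :=
  Finset.prod_pos fun i _ => ite_one_pos (hw i)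

lemma psi_flp {w : SiteS d n → ℝ} (hw : ∀ i, 0 < w i) (k : SiteS d n) (η : ConfS d n) :
    Psi w (flpS k η) = Psi w η * Gp w k (η k) := by
  classical
  have hfun : (fun i => if flpS k η i then w i else 1)
      = Function.update (fun i => if η i then w i else 1) k (if !(η k) then w k else 1) := by
    funext i
    by_cases hik : i = k
    · subst hik; simp [flpS]
    · rw [Function.update_of_ne hik]; simp [flpS, hik]
  have h1 : Psi w (flpS k η)
      = (if !(η k) then w k else 1) * ∏ i ∈ Finset.univ.erase k, (if η i then w i else 1) := by
    rw [Psi, hfun, Finset.prod_update_of_mem (Finset.mem_univ k), ← Finset.erase_eq]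
  have h2 : Psi w η
      = (if η k then w k else 1) * ∏ i ∈ Finset.univ.erase k, (if η i then w i else 1) := by
    rw [Psi, ← Finset.mul_prod_erase Finset.univ _ (Finset.mem_univ k)]
  rw [h1, h2, Gp]
  cases hk : η k
  · norm_num
    ring
  · norm_num
    rw [mul_comm (w k), mul_assoc, mul_inv_cancel₀ (hw k).ne', mul_one]

lemma psi_exch {w : SiteS d n → ℝ} (hw : ∀ i, 0 < w i) (i j : SiteS d n) (η : ConfS d n) :
    Psi w (exchS i j η) = Psi w η * (Ef w i j (η i) (η j) + 1) := by
  classical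
  have hA : (if η i then w i else 1) ≠ 0 := (ite_one_pos (hw i)).ne'
  have hB : (if η j then w j else 1) ≠ 0 := (ite_one_pos (hw j)).ne'
  by_cases hij : i = j
  · subst hij
    have hex : exchS i i η = η := by
      funext l
      rw [exchS]
      by_cases hl : l = i
      · subst hl; simp
      · simp [hl]
    rw [hex, Ef]
    rw [div_self (mul_ne_zero hA hB)]
    ring
  · have hjmem : j ∈ Finset.univ.erase i :=
      Finset.mem_erase.mpr ⟨fun h => hij h.symm, Finset.mem_univ j⟩
    have tail_eq : ∀ l ∈ (Finset.univ.erase i).erase j,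
        (if exchS i j η l then w l else 1) = (if η l then w l else 1) := by
      intro l hl
      have hlj : l ≠ j := (Finset.mem_erase.mp hl).1
      have hli : l ≠ i := (Finset.mem_erase.mp (Finset.mem_erase.mp hl).2).1
      rw [exchS]
      simp [hli, hlj]
    have h1 : Psi w (exchS i j η)
        = (if η j then w i else 1) * ((if η i then w j else 1) *
            ∏ l ∈ (Finset.univ.erase i).erase j, (if η l then w l else 1)) := by
      rw [Psi, ← Finset.mul_prod_erase Finset.univ _ (Finset.mem_univ i),
        ← Finset.mul_prod_erase _ _ hjmem, Finset.prod_congr rfl tail_eq]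
      congr 2
      · rw [exchS]; simp
      · rw [exchS]; simp [hij, Ne.symm hij]
    have h2 : Psi w η
        = (if η i then w i else 1) * ((if η j then w j else 1) *
            ∏ l ∈ (Finset.univ.erase i).erase j, (if η l then w l else 1)) := by
      rw [Psi, ← Finset.mul_prod_erase Finset.univ _ (Finset.mem_univ i),
        ← Finset.mul_prod_erase _ _ hjmem]
    rw [h1, h2, Ef, sub_add_cancel, ← mul_div_assoc, eq_div_iff (mul_ne_zero hA hB)]
    ring

end PsiLemmas

section Identity
variable {d n : ℕ}

lemma lstar_eq (ρ a b : ℝ) {w : SiteS d n → ℝ} (hw : ∀ i, 0 < w i) (η : ConfS d n) :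
    Lstar ρ a b (Psi w) η = Psi w η * Sfun ρ a b w η := by
  classical
  rw [Lstar, Lzero, Sfun, mul_add, mul_add]
  congr 1
  · congr 1
    · -- exchange part
      rw [← mul_div_assoc]
      congr 1
      rw [Finset.mul_sum]
      refine Finset.sum_congr rfl fun i _ => ?_
      rw [Finset.mul_sum]
      refine Finset.sum_congr rfl fun j _ => ?_
      rw [mul_ite, mul_zero]
      by_cases hnbr : Nbr i.1 j.1
      · rw [if_pos hnbr, if_pos hnbr, psi_exch hw]
        ring
      · rw [if_neg hnbr, if_neg hnbr]
    · -- boundary flips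
      rw [Finset.mul_sum]
      refine Finset.sum_congr rfl fun i _ => ?_
      rw [psi_flp hw]
      ring
  · -- origin terms
    rw [Finset.mul_sum]
    refine Finset.sum_congr rfl fun k _ => ?_
    rw [mul_ite, mul_zero]
    by_cases hnbr : Nbr (0 : Fin d → ℤ) k.1
    · rw [if_pos hnbr, if_pos hnbr, psi_flp hw, Ow, Gp]
      cases hk : η k
      · norm_num
        ring
      · norm_num
        ring
    · rw [if_neg hnbr, if_neg hnbr]

end Identity


section Diff
variable {d n : ℕ}

lemma ef_symm (w : SiteS d n → ℝ) (i j : SiteS d n) (x y : Bool) :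
    Ef w i j x y = Ef w j i y x := by
  rw [Ef, Ef]
  ring_nf

lemma sfun_diff (ρ a b : ℝ) (w : SiteS d n → ℝ) (η : ConfS d n) (k : SiteS d n) :
    Sfun ρ a b w (Function.update η k true) - Sfun ρ a b w (Function.update η k false)
      = (∑ j : SiteS d n, if Nbr k.1 j.1 then
            Ef w k j true (η j) - Ef w k j false (η j) else 0)
        + (nOutS k : ℝ) * (kap ρ * ((w k)⁻¹ - 1) - (kap ρ)⁻¹ * (w k - 1))
        + (if Nbr (0 : Fin d → ℤ) k.1 then
            Ow ρ a b w k true - Ow ρ a b w k false else 0) := by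
  classical
  set η₁ := Function.update η k true with hη₁
  set η₀ := Function.update η k false with hη₀
  have h1k : η₁ k = true := Function.update_self _ _ _
  have h0k : η₀ k = false := Function.update_self _ _ _
  have h1ne : ∀ i, i ≠ k → η₁ i = η i := fun i hi => Function.update_of_ne hi _ _
  have h0ne : ∀ i, i ≠ k → η₀ i = η i := fun i hi => Function.update_of_ne hi _ _
  set R : SiteS d n → ℝ := fun j => if Nbr k.1 j.1 then
      Ef w k j true (η j) - Ef w k j false (η j) else 0 with hR
  have hRapp : ∀ j, R j = if Nbr k.1 j.1 then
      Ef w k j true (η j) - Ef w k j false (η j) else 0 := fun j => rfl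
  have hRk : R k = 0 := by rw [hRapp, if_neg (nbr_irrefl k.1)]
  -- piece A
  have hA : (∑ i : SiteS d n, ∑ j : SiteS d n, if Nbr i.1 j.1 then Ef w i j (η₁ i) (η₁ j) else 0)
      - (∑ i : SiteS d n, ∑ j : SiteS d n, if Nbr i.1 j.1 then Ef w i j (η₀ i) (η₀ j) else 0)
      = 2 * ∑ j : SiteS d n, R j := by
    rw [← Finset.sum_sub_distrib]
    have hrow : ∀ j : SiteS d n,
        (if Nbr k.1 j.1 then Ef w k j (η₁ k) (η₁ j) else 0)
          - (if Nbr k.1 j.1 then Ef w k j (η₀ k) (η₀ j) else 0) = R j := by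
      intro j
      rw [hRapp]
      by_cases hjk : j = k
      · subst hjk; rw [if_neg (nbr_irrefl j.1), if_neg (nbr_irrefl j.1),
          if_neg (nbr_irrefl j.1), sub_self]
      · rw [h1k, h0k, h1ne j hjk, h0ne j hjk]
        by_cases hnbr : Nbr k.1 j.1
        · rw [if_pos hnbr, if_pos hnbr, if_pos hnbr]
        · rw [if_neg hnbr, if_neg hnbr, if_neg hnbr, sub_self]
    have hcol : ∀ i : SiteS d n, i ≠ k →
        (∑ j : SiteS d n, ((if Nbr i.1 j.1 then Ef w i j (η₁ i) (η₁ j) else 0)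
          - (if Nbr i.1 j.1 then Ef w i j (η₀ i) (η₀ j) else 0))) = R i := by
      intro i hik
      have hterm : ∀ j : SiteS d n,
          ((if Nbr i.1 j.1 then Ef w i j (η₁ i) (η₁ j) else 0)
            - (if Nbr i.1 j.1 then Ef w i j (η₀ i) (η₀ j) else 0))
          = if j = k then R i else 0 := by
        intro j
        by_cases hjk : j = k
        · subst hjk
          rw [if_pos rfl, hRapp, h1ne i hik, h0ne i hik, h1k, h0k]
          by_cases hnbr : Nbr i.1 j.1
          · have hnbr' : Nbr j.1 i.1 := nbr_symm hnbr
            rw [if_pos hnbr, if_pos hnbr, if_pos hnbr',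
              ef_symm w i j (η i) true, ef_symm w i j (η i) false]
          · have hnbr' : ¬ Nbr j.1 i.1 := fun hc => hnbr (nbr_symm hc)
            rw [if_neg hnbr, if_neg hnbr, if_neg hnbr', sub_self]
        · rw [if_neg hjk, h1ne i hik, h0ne i hik, h1ne j hjk, h0ne j hjk, sub_self]
      rw [Finset.sum_congr rfl fun j _ => hterm j]
      simp
    calc (∑ i : SiteS d n, ((∑ j : SiteS d n, if Nbr i.1 j.1 then Ef w i j (η₁ i) (η₁ j) else 0)
            - (∑ j : SiteS d n, if Nbr i.1 j.1 then Ef w i j (η₀ i) (η₀ j) else 0)))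
        = ∑ i : SiteS d n, ∑ j : SiteS d n, ((if Nbr i.1 j.1 then Ef w i j (η₁ i) (η₁ j) else 0)
            - (if Nbr i.1 j.1 then Ef w i j (η₀ i) (η₀ j) else 0)) :=
          Finset.sum_congr rfl fun i _ => (Finset.sum_sub_distrib _ _).symm
      _ = (∑ j : SiteS d n, R j) + ∑ i ∈ Finset.univ.erase k, R i := by
          rw [← Finset.add_sum_erase _ _ (Finset.mem_univ k)]
          congr 1
          · exact Finset.sum_congr rfl fun j _ => hrow j
          · exact Finset.sum_congr rfl fun i hi => hcol i (Finset.mem_erase.mp hi).1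
      _ = 2 * ∑ j : SiteS d n, R j := by
          rw [Finset.sum_erase_eq_sub (Finset.mem_univ k), hRk]
          ring
  -- piece B
  have hB : (∑ i : SiteS d n, (nOutS i : ℝ) * bdRateS ρ η₁ i * (Gp w i (η₁ i) - 1))
      - (∑ i : SiteS d n, (nOutS i : ℝ) * bdRateS ρ η₀ i * (Gp w i (η₀ i) - 1))
      = (nOutS k : ℝ) * (kap ρ * ((w k)⁻¹ - 1) - (kap ρ)⁻¹ * (w k - 1)) := by
    rw [← Finset.sum_sub_distrib]
    rw [Finset.sum_eq_single_of_mem k (Finset.mem_univ k)]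
    · have hb1 : bdRateS ρ η₁ k = kap ρ := by
        rw [bdRateS, h1k]; norm_num
      have hb0 : bdRateS ρ η₀ k = (kap ρ)⁻¹ := by
        rw [bdRateS, h0k]; norm_num
      rw [hb1, hb0, Gp, Gp, h1k, h0k, if_pos rfl, if_neg (by simp)]
      ring
    · intro i _ hik
      have hbr : bdRateS ρ η₁ i = bdRateS ρ η₀ i := by
        rw [bdRateS, bdRateS, h1ne i hik, h0ne i hik]
      rw [hbr, h1ne i hik, h0ne i hik, sub_self]
  -- piece O
  have hO : (∑ j : SiteS d n, if Nbr (0 : Fin d → ℤ) j.1 then Ow ρ a b w j (η₁ j) else 0)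
      - (∑ j : SiteS d n, if Nbr (0 : Fin d → ℤ) j.1 then Ow ρ a b w j (η₀ j) else 0)
      = (if Nbr (0 : Fin d → ℤ) k.1 then
            Ow ρ a b w k true - Ow ρ a b w k false else 0) := by
    rw [← Finset.sum_sub_distrib]
    rw [Finset.sum_eq_single_of_mem k (Finset.mem_univ k)]
    · rw [h1k, h0k]
      by_cases hnbr : Nbr (0 : Fin d → ℤ) k.1
      · rw [if_pos hnbr, if_pos hnbr, if_pos hnbr]
      · rw [if_neg hnbr, if_neg hnbr, if_neg hnbr, sub_self]
    · intro j _ hjk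
      rw [h1ne j hjk, h0ne j hjk, sub_self]
  rw [Sfun, Sfun]
  have : ∀ x1 x2 y1 y2 z1 z2 : ℝ, (x1/2 + y1 + z1) - (x2/2 + y2 + z2)
      = (x1 - x2)/2 + (y1 - y2) + (z1 - z2) := by intros; ring
  rw [this, hA, hB, hO]
  ring
end Diff

section Bounds
variable {d n : ℕ}

lemma two_le_div_add_div {u v : ℝ} (hu : 0 < u) (hv : 0 < v) : 2 ≤ u / v + v / u := by
  rw [div_add_div _ _ hv.ne' hu.ne', le_div_iff₀ (mul_pos hv hu)]
  nlinarith [sq_nonneg (u - v)]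

lemma gam_pos {C : ℝ} (hC : 0 < C) {h : (Fin d → ℤ) → ℝ}
    (h01 : ∀ i, h i ∈ Set.Icc (0 : ℝ) 1) (x : Fin d → ℤ) : 0 < gam C h x := by
  rw [gam]
  have := (h01 x).1
  have : 0 < 1 + C * h x := by nlinarith
  positivity

lemma gam_le_one {C : ℝ} (hC : 0 < C) {h : (Fin d → ℤ) → ℝ}
    (h01 : ∀ i, h i ∈ Set.Icc (0 : ℝ) 1) (x : Fin d → ℤ) : gam C h x ≤ 1 := by
  rw [gam]
  have := (h01 x).1
  rw [div_le_one (by nlinarith)]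
  nlinarith

lemma gam_eq {C : ℝ} (hC : 0 < C) {h : (Fin d → ℤ) → ℝ}
    (h01 : ∀ i, h i ∈ Set.Icc (0 : ℝ) 1) (x : Fin d → ℤ) :
    1 - gam C h x = C * h x * gam C h x := by
  have h1 := (h01 x).1
  have hden : (0:ℝ) < 1 + C * h x := by nlinarith
  rw [gam]
  field_simp
  ring

lemma gam_div {C : ℝ} (hC : 0 < C) {h : (Fin d → ℤ) → ℝ}
    (h01 : ∀ i, h i ∈ Set.Icc (0 : ℝ) 1) (x y : Fin d → ℤ) :
    gam C h x / gam C h y = gam C h x * (1 + C * h y) := by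
  simp only [gam]
  rw [div_div_eq_mul_div, div_one]

lemma kap_pos {ρ : ℝ} (hρ : ρ ∈ Set.Ioo (0:ℝ) 1) : 0 < kap ρ := by
  rw [kap]
  have := hρ.1; have := hρ.2
  apply Real.sqrt_pos.mpr
  apply div_pos <;> linarith

lemma kap_add_inv {ρ : ℝ} (hρ : ρ ∈ Set.Ioo (0:ℝ) 1) : 2 ≤ kap ρ + (kap ρ)⁻¹ := by
  have hk := kap_pos hρ
  have := two_le_div_add_div hk hk  -- not what we want; do directly
  nlinarith [sq_nonneg (kap ρ - 1), mul_inv_cancel₀ hk.ne', inv_pos.mpr hk]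

lemma ef_diff_lb {w : SiteS d n → ℝ} (hw : ∀ i, 0 < w i) (k j : SiteS d n) (y : Bool) :
    1 - w k / w j ≤ Ef w k j true y - Ef w k j false y := by
  have hk := hw k; have hj := hw j
  have h2 := two_le_div_add_div hk hj
  cases y
  all_goals rw [Ef, Ef]
  all_goals norm_num
  all_goals linarith [div_self (mul_ne_zero hk.ne' hj.ne'), h2]

lemma ef_diff_ub {w : SiteS d n → ℝ} (hw : ∀ i, 0 < w i) (k j : SiteS d n) (y : Bool) :
    Ef w k j true y - Ef w k j false y ≤ w j / w k - 1 := by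
  have hk := hw k; have hj := hw j
  have h2 := two_le_div_add_div hk hj
  cases y
  all_goals rw [Ef, Ef]
  all_goals norm_num
  all_goals linarith [div_self (mul_ne_zero hk.ne' hj.ne'), h2]

lemma kap_term_lb {ρ g : ℝ} (hρ : ρ ∈ Set.Ioo (0:ℝ) 1) (hg0 : 0 < g) (hg1 : g ≤ 1) :
    1 - g ≤ kap ρ * (g⁻¹ - 1) - (kap ρ)⁻¹ * (g - 1) := by
  have hk := kap_pos hρ
  have hki : 0 < (kap ρ)⁻¹ := inv_pos.mpr hk
  have h2 := kap_add_inv hρ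
  have key : (1 - g) * g ≤ (kap ρ * (g⁻¹ - 1) - (kap ρ)⁻¹ * (g - 1)) * g := by
    have e : (kap ρ * (g⁻¹ - 1) - (kap ρ)⁻¹ * (g - 1)) * g
        = kap ρ * (1 - g) + (kap ρ)⁻¹ * (1 - g) * g := by
      field_simp
      ring
    rw [e]
    nlinarith [mul_nonneg (sub_nonneg.2 hg1) hk.le,
      mul_nonneg (mul_nonneg (sub_nonneg.2 hg1) hg0.le) (by linarith : (0:ℝ) ≤ kap ρ + (kap ρ)⁻¹ - 2),
      mul_nonneg (mul_nonneg (sub_nonneg.2 hg1) (sub_nonneg.2 hg1)) hk.le]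
  exact le_of_mul_le_mul_right key hg0

lemma kap_term_ub {ρ u : ℝ} (hρ : ρ ∈ Set.Ioo (0:ℝ) 1) (hu0 : 0 < u) (hu1 : 1 ≤ u) :
    kap ρ * (u⁻¹ - 1) - (kap ρ)⁻¹ * (u - 1) ≤ -(1 - u⁻¹) := by
  have hk := kap_pos hρ
  have hki : 0 < (kap ρ)⁻¹ := inv_pos.mpr hk
  have h2 := kap_add_inv hρ
  have key : (kap ρ * (u⁻¹ - 1) - (kap ρ)⁻¹ * (u - 1)) * u ≤ (-(1 - u⁻¹)) * u := by
    have e1 : (kap ρ * (u⁻¹ - 1) - (kap ρ)⁻¹ * (u - 1)) * u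
        = kap ρ * (1 - u) - (kap ρ)⁻¹ * (u - 1) * u := by
      field_simp
    have e2 : (-(1 - u⁻¹)) * u = -(u - 1) := by
      field_simp
    rw [e1, e2]
    nlinarith [mul_nonneg (sub_nonneg.2 hu1) hki.le,
      mul_nonneg (sub_nonneg.2 hu1) (by linarith : (0:ℝ) ≤ kap ρ + (kap ρ)⁻¹ - 2),
      mul_nonneg (mul_nonneg (sub_nonneg.2 hu1) (sub_nonneg.2 hu1)) hki.le]
  exact le_of_mul_le_mul_right key hu0

end Bounds

section Harm
variable {d n : ℕ}

lemma site_nbr_sum (hn : 1 ≤ n) (F : (Fin d → ℤ) → ℝ) (k : SiteS d n) :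
    ∑ j : SiteS d n, (if Nbr k.1 j.1 then F j.1 else 0)
      = (∑ j ∈ (Lam d n).filter (fun j => Nbr k.1 j), F j)
        - (if Nbr k.1 0 then F 0 else 0) := by
  classical
  have h1 : ∑ j : SiteS d n, (if Nbr k.1 j.1 then F j.1 else 0)
      = ∑ j ∈ (Lam d n).erase 0, (if Nbr k.1 j then F j else 0) :=
    Finset.sum_coe_sort ((Lam d n).erase 0) (fun j => if Nbr k.1 j then F j else 0)
  rw [h1, ← Finset.sum_filter]
  have h2 : ((Lam d n).erase 0).filter (fun j => Nbr k.1 j)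
      = ((Lam d n).filter (fun j => Nbr k.1 j)).erase 0 := by
    ext j
    simp only [Finset.mem_filter, Finset.mem_erase]
    tauto
  rw [h2]
  by_cases h0 : Nbr k.1 0
  · have hmem : (0 : Fin d → ℤ) ∈ (Lam d n).filter (fun j => Nbr k.1 j) :=
      Finset.mem_filter.mpr ⟨zero_mem_Lam hn, h0⟩
    rw [Finset.sum_erase_eq_sub hmem, if_pos h0]
  · have hnmem : (0 : Fin d → ℤ) ∉ (Lam d n).filter (fun j => Nbr k.1 j) := by
      intro hc
      exact h0 (Finset.mem_filter.mp hc).2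
    rw [Finset.erase_eq_of_notMem hnmem, if_neg h0, sub_zero]

lemma key_harm {h : (Fin d → ℤ) → ℝ}
    (hout : ∀ i ∉ Lam d n, h i = 0)
    (hharm : ∀ i ∈ Lam d n, i ≠ 0 → 2 * (d : ℝ) * h i = ∑ j ∈ nbrFinset i, h j)
    (k : SiteS d n) :
    ∑ j ∈ (Lam d n).filter (fun j => Nbr k.1 j), h j = 2 * (d : ℝ) * h k.1 := by
  classical
  have hk := Finset.mem_erase.mp k.2
  have hfe : (nbrFinset k.1).filter (fun j => j ∈ Lam d n)
      = (Lam d n).filter (fun j => Nbr k.1 j) := by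
    ext j
    simp only [Finset.mem_filter, nbrFinset]
    constructor
    · rintro ⟨⟨-, hnbr⟩, hlam⟩
      exact ⟨hlam, hnbr⟩
    · rintro ⟨hlam, hnbr⟩
      exact ⟨⟨nbr_mem_Icc hnbr, hnbr⟩, hlam⟩
  have hsplit := Finset.sum_filter_add_sum_filter_not (nbrFinset k.1)
    (fun j => j ∈ Lam d n) h
  have hzero : ∑ j ∈ (nbrFinset k.1).filter (fun j => j ∉ Lam d n), h j = 0 :=
    Finset.sum_eq_zero fun j hj => hout j (Finset.mem_filter.mp hj).2
  have := hharm k.1 hk.2 hk.1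
  rw [← hsplit, hzero, add_zero] at this
  rw [← hfe]
  exact this.symm

end Harm

end LstarAux

/-- **Key step in the proof of Proposition 1.6.**  Under the two rate inequalities at
the neighbors of the origin, `L*ψ/ψ` is increasing and `L*ψ'/ψ'` is decreasing on
`Ω_n^*`. -/
theorem Lstar_potential_monotone
    {d n : ℕ} (hd : 1 ≤ d) (hn : 2 ≤ n)
    (ρ : ℝ) (hρ : ρ ∈ Set.Ioo (0 : ℝ) 1)
    (a b : ℝ) (ha : 0 < a) (hb : 0 < b)
    (h : (Fin d → ℤ) → ℝ)
    (h01 : ∀ i, h i ∈ Set.Icc (0 : ℝ) 1)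
    (h0 : h 0 = 1)
    (hout : ∀ i ∉ Lam d n, h i = 0)
    (hharm : ∀ i ∈ Lam d n, i ≠ 0 → 2 * (d : ℝ) * h i = ∑ j ∈ nbrFinset i, h j)
    (C : ℝ) (hC : 0 < C)
    (hineq : ∀ k : Fin d → ℤ, k ∈ Lam d n → Nbr (0 : Fin d → ℤ) k →
      b * ((1 - ρ) / (ρ * gam C h k) + 1) - a * (1 + ρ / (1 - ρ) * gam C h k) ≥
          1 - gam C h k / gam C h 0 ∧
        a * (1 + ρ / ((1 - ρ) * gam C h k)) - b * ((1 - ρ) / ρ * gam C h k + 1) ≥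
          1 - gam C h k / gam C h 0) :
    Monotone (fun η : ConfS d n => Lstar ρ a b (psiS C h) η / psiS C h η) ∧
      Antitone (fun η : ConfS d n => Lstar ρ a b (psiS' C h) η / psiS' C h η) := by
  classical
  obtain ⟨hρ0, hρ1⟩ := hρ
  have hρ1' : (0:ℝ) < 1 - ρ := by linarith
  have hn1 : 1 ≤ n := le_trans (by norm_num) hn
  set g : SiteS d n → ℝ := fun i => gam C h i.1 with hg
  have hgpos : ∀ i : SiteS d n, 0 < g i := fun i => LstarAux.gam_pos hC h01 i.1
  have hgle : ∀ i : SiteS d n, g i ≤ 1 := fun i => LstarAux.gam_le_one hC h01 i.1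
  set g' : SiteS d n → ℝ := fun i => (gam C h i.1)⁻¹ with hg'
  have hg'pos : ∀ i : SiteS d n, 0 < g' i := fun i => inv_pos.mpr (hgpos i)
  have hg'ge : ∀ i : SiteS d n, 1 ≤ g' i := fun i => (one_le_inv₀ (hgpos i)).mpr (hgle i)
  have hpsi : psiS C h = LstarAux.Psi g := rfl
  have hpsi' : psiS' C h = LstarAux.Psi g' := rfl
  constructor
  · -- Monotone part
    apply LstarAux.monotone_of_flip
    intro η k
    show Lstar ρ a b (psiS C h) (Function.update η k false) /
        psiS C h (Function.update η k false)
      ≤ Lstar ρ a b (psiS C h) (Function.update η k true) /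
        psiS C h (Function.update η k true)
    rw [hpsi, LstarAux.lstar_eq ρ a b hgpos, LstarAux.lstar_eq ρ a b hgpos,
      mul_div_cancel_left₀ _ (LstarAux.psi_pos hgpos _).ne',
      mul_div_cancel_left₀ _ (LstarAux.psi_pos hgpos _).ne',
      ← sub_nonneg, LstarAux.sfun_diff]
    have hkL := Finset.mem_erase.mp k.2
    set N : ℝ := (((Lam d n).filter (fun j => Nbr k.1 j)).card : ℝ) with hN
    have hNle : N ≤ 2*(d:ℝ) := by
      rw [hN]
      exact_mod_cast LstarAux.nbr_card_le (n := n) k.1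
    have hnout : (nOutS k : ℝ) = 2*(d:ℝ) - N := by
      rw [nOutS]; push_cast; ring
    have hgk1 : 1 - g k = C * h k.1 * g k := LstarAux.gam_eq hC h01 k.1
    have hsum : ∑ j : SiteS d n, (if Nbr k.1 j.1 then (1 - g k / g j) else 0)
        ≤ ∑ j : SiteS d n, (if Nbr k.1 j.1 then
            LstarAux.Ef g k j true (η j) - LstarAux.Ef g k j false (η j) else 0) := by
      refine Finset.sum_le_sum fun j _ => ?_
      by_cases hnbr : Nbr k.1 j.1
      · rw [if_pos hnbr, if_pos hnbr]
        exact LstarAux.ef_diff_lb hgpos k j (η j)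
      · rw [if_neg hnbr, if_neg hnbr]
    have hval : ∀ j : SiteS d n, (if Nbr k.1 j.1 then (1 - g k / g j) else 0)
        = C * g k * h k.1 * (if Nbr k.1 j.1 then (1:ℝ) else 0)
          - C * g k * (if Nbr k.1 j.1 then h j.1 else 0) := by
      intro j
      by_cases hnbr : Nbr k.1 j.1
      · rw [if_pos hnbr, if_pos hnbr, if_pos hnbr]
        simp only [hg]
        rw [LstarAux.gam_div hC h01]
        linear_combination (LstarAux.gam_eq hC h01 k.1)
      · rw [if_neg hnbr, if_neg hnbr, if_neg hnbr]
        ring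
    have hconst : ∑ j : SiteS d n, (if Nbr k.1 j.1 then (1:ℝ) else 0)
        = N - (if Nbr k.1 0 then (1:ℝ) else 0) := by
      rw [LstarAux.site_nbr_sum hn1 (fun _ => (1:ℝ)) k, Finset.sum_const,
        nsmul_eq_mul, mul_one, hN]
    have hhsum : ∑ j : SiteS d n, (if Nbr k.1 j.1 then h j.1 else 0)
        = 2*(d:ℝ)*h k.1 - (if Nbr k.1 0 then (1:ℝ) else 0) := by
      rw [LstarAux.site_nbr_sum hn1 h k, LstarAux.key_harm hout hharm k, h0]
    have hsum2 : ∑ j : SiteS d n, (if Nbr k.1 j.1 then (1 - g k / g j) else 0)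
        = C * g k * h k.1 * (N - (if Nbr k.1 0 then (1:ℝ) else 0))
          - C * g k * (2*(d:ℝ)*h k.1 - (if Nbr k.1 0 then (1:ℝ) else 0)) := by
      rw [Finset.sum_congr rfl fun j _ => hval j, Finset.sum_sub_distrib,
        ← Finset.mul_sum, ← Finset.mul_sum, hconst, hhsum]
    have hκ : (2*(d:ℝ) - N) * (1 - g k)
        ≤ (nOutS k : ℝ) * (kap ρ * ((g k)⁻¹ - 1) - (kap ρ)⁻¹ * (g k - 1)) := by
      rw [hnout]
      exact mul_le_mul_of_nonneg_left
        (LstarAux.kap_term_lb ⟨hρ0, hρ1⟩ (hgpos k) (hgle k)) (by linarith)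
    by_cases ho : Nbr (0 : Fin d → ℤ) k.1
    · have hok : Nbr k.1 0 := LstarAux.nbr_symm ho
      have hineqk := (hineq k.1 hkL.2 ho).1
      rw [LstarAux.gam_div hC h01, h0, mul_one] at hineqk
      have hOw : 1 - g k * (1 + C)
          ≤ LstarAux.Ow ρ a b g k true - LstarAux.Ow ρ a b g k false := by
        have e1 : LstarAux.Ow ρ a b g k true - LstarAux.Ow ρ a b g k false
            = b * ((1 - ρ)/(ρ * g k) + 1) - a * (1 + ρ/(1-ρ) * g k) := by
          simp only [LstarAux.Ow, if_true, if_false, Bool.false_eq_true]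
          field_simp
          ring
        rw [e1]
        simp only [hg]
        exact hineqk
      rw [if_pos ho]
      rw [if_pos hok] at hsum2
      have hzero : (C * g k * h k.1 * (N - 1) - C * g k * (2*(d:ℝ)*h k.1 - 1))
          + (2*(d:ℝ) - N) * (1 - g k) + (1 - g k * (1 + C)) = 0 := by
        linear_combination (2*(d:ℝ) - N + 1) * hgk1
      linarith
    · have hok : ¬ Nbr k.1 0 := fun hc => ho (LstarAux.nbr_symm hc)
      rw [if_neg ho]
      rw [if_neg hok] at hsum2
      have hzero : (C * g k * h k.1 * (N - 0) - C * g k * (2*(d:ℝ)*h k.1 - 0))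
          + (2*(d:ℝ) - N) * (1 - g k) = 0 := by
        linear_combination (2*(d:ℝ) - N) * hgk1
      linarith
  · -- Antitone part
    apply LstarAux.antitone_of_flip
    intro η k
    show Lstar ρ a b (psiS' C h) (Function.update η k true) /
        psiS' C h (Function.update η k true)
      ≤ Lstar ρ a b (psiS' C h) (Function.update η k false) /
        psiS' C h (Function.update η k false)
    rw [hpsi', LstarAux.lstar_eq ρ a b hg'pos, LstarAux.lstar_eq ρ a b hg'pos,
      mul_div_cancel_left₀ _ (LstarAux.psi_pos hg'pos _).ne',
      mul_div_cancel_left₀ _ (LstarAux.psi_pos hg'pos _).ne',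
      ← sub_nonpos, LstarAux.sfun_diff]
    have hinv : (g' k)⁻¹ = g k := by
      simp only [hg', hg]
      rw [inv_inv]
    rw [hinv]
    have hkL := Finset.mem_erase.mp k.2
    set N : ℝ := (((Lam d n).filter (fun j => Nbr k.1 j)).card : ℝ) with hN
    have hNle : N ≤ 2*(d:ℝ) := by
      rw [hN]
      exact_mod_cast LstarAux.nbr_card_le (n := n) k.1
    have hnout : (nOutS k : ℝ) = 2*(d:ℝ) - N := by
      rw [nOutS]; push_cast; ring
    have hgk1 : 1 - g k = C * h k.1 * g k := LstarAux.gam_eq hC h01 k.1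
    have hsum : ∑ j : SiteS d n, (if Nbr k.1 j.1 then
            LstarAux.Ef g' k j true (η j) - LstarAux.Ef g' k j false (η j) else 0)
        ≤ ∑ j : SiteS d n, (if Nbr k.1 j.1 then (g' j / g' k - 1) else 0) := by
      refine Finset.sum_le_sum fun j _ => ?_
      by_cases hnbr : Nbr k.1 j.1
      · rw [if_pos hnbr, if_pos hnbr]
        exact LstarAux.ef_diff_ub hg'pos k j (η j)
      · rw [if_neg hnbr, if_neg hnbr]
    have hval : ∀ j : SiteS d n, (if Nbr k.1 j.1 then (g' j / g' k - 1) else 0)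
        = C * g k * (if Nbr k.1 j.1 then h j.1 else 0)
          - C * g k * h k.1 * (if Nbr k.1 j.1 then (1:ℝ) else 0) := by
      intro j
      by_cases hnbr : Nbr k.1 j.1
      · rw [if_pos hnbr, if_pos hnbr, if_pos hnbr]
        simp only [hg', hg]
        rw [inv_div_inv, LstarAux.gam_div hC h01]
        linear_combination -(LstarAux.gam_eq hC h01 k.1)
      · rw [if_neg hnbr, if_neg hnbr, if_neg hnbr]
        ring
    have hconst : ∑ j : SiteS d n, (if Nbr k.1 j.1 then (1:ℝ) else 0)
        = N - (if Nbr k.1 0 then (1:ℝ) else 0) := by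
      rw [LstarAux.site_nbr_sum hn1 (fun _ => (1:ℝ)) k, Finset.sum_const,
        nsmul_eq_mul, mul_one, hN]
    have hhsum : ∑ j : SiteS d n, (if Nbr k.1 j.1 then h j.1 else 0)
        = 2*(d:ℝ)*h k.1 - (if Nbr k.1 0 then (1:ℝ) else 0) := by
      rw [LstarAux.site_nbr_sum hn1 h k, LstarAux.key_harm hout hharm k, h0]
    have hsum2 : ∑ j : SiteS d n, (if Nbr k.1 j.1 then (g' j / g' k - 1) else 0)
        = C * g k * (2*(d:ℝ)*h k.1 - (if Nbr k.1 0 then (1:ℝ) else 0))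
          - C * g k * h k.1 * (N - (if Nbr k.1 0 then (1:ℝ) else 0)) := by
      rw [Finset.sum_congr rfl fun j _ => hval j, Finset.sum_sub_distrib,
        ← Finset.mul_sum, ← Finset.mul_sum, hconst, hhsum]
    have hκ : (nOutS k : ℝ) * (kap ρ * (g k - 1) - (kap ρ)⁻¹ * (g' k - 1))
        ≤ (2*(d:ℝ) - N) * (-(1 - g k)) := by
      rw [hnout]
      have hub := LstarAux.kap_term_ub ⟨hρ0, hρ1⟩ (hg'pos k) (hg'ge k)
      rw [hinv] at hub
      exact mul_le_mul_of_nonneg_left hub (by linarith)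
    by_cases ho : Nbr (0 : Fin d → ℤ) k.1
    · have hok : Nbr k.1 0 := LstarAux.nbr_symm ho
      have hineqk := (hineq k.1 hkL.2 ho).2
      rw [LstarAux.gam_div hC h01, h0, mul_one] at hineqk
      have hOw : LstarAux.Ow ρ a b g' k true - LstarAux.Ow ρ a b g' k false
          ≤ -(1 - g k * (1 + C)) := by
        have e1 : LstarAux.Ow ρ a b g' k true - LstarAux.Ow ρ a b g' k false
            = -(a * (1 + ρ/((1-ρ) * g k)) - b * ((1-ρ)/ρ * g k + 1)) := by
          simp only [LstarAux.Ow, if_true, if_false, Bool.false_eq_true, hinv]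
          simp only [hg', hg]
          field_simp
          ring
        rw [e1]
        simp only [hg] at hineqk ⊢
        linarith
      rw [if_pos ho]
      rw [if_pos hok] at hsum2
      have hzero : (C * g k * (2*(d:ℝ)*h k.1 - 1) - C * g k * h k.1 * (N - 1))
          + (2*(d:ℝ) - N) * (-(1 - g k)) + (-(1 - g k * (1 + C))) = 0 := by
        linear_combination -(2*(d:ℝ) - N + 1) * hgk1
      linarith
    · have hok : ¬ Nbr k.1 0 := fun hc => ho (LstarAux.nbr_symm hc)
      rw [if_neg ho]
      rw [if_neg hok] at hsum2
      have hzero : (C * g k * (2*(d:ℝ)*h k.1 - 0) - C * g k * h k.1 * (N - 0))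
          + (2*(d:ℝ) - N) * (-(1 - g k)) = 0 := by
        linear_combination -(2*(d:ℝ) - N) * hgk1
      linarith
end
end

section
/- Finite-state version of Proposition 1.8(ii). For every nonzero p : S → [0,∞) and every g : S → ℝ, lim_{t→∞} [Σ_{x∈S} p(x)(e^{tM}g)(x)] / [Σ_{x∈S} p(x)(e^{tM}1)(x)] = ⟨g, u⟩_ν / ⟨1, u⟩_ν, where 1 denotes the constant function equal to one; that is, the conditioned law at time t started from p converges to the probability measure μ(x) = u(x)ν(x)/⟨1,u⟩_ν. -/
/-
Conjugating by `diagonal √ν` turns the ν-symmetric matrix `M` into a symmetric one, so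
`M = P * diagonal μ * P⁻¹` with real `μ` and `e^{tM} = P * diagonal (e^{tμ}) * P⁻¹`. Every `μ j` is
at most `-λ`, hence `e^{λt} e^{tM}` converges to the spectral projector `Π` onto the
`-λ`-eigenspace. As `Π` commutes with `M`, its columns are multiples of `u` and its rows are left
eigenvectors, which ν-symmetry turns into multiples of `ν u`; together with `Π u = u` this makes
`Π` the ν-orthogonal projection `f ↦ (⟨f,u⟩_ν / ⟨u,u⟩_ν) u`. The ratio in the theorem does not
change when the semigroup is rescaled by `e^{λt}`, so it tends to `⟨g,u⟩_ν / ⟨1,u⟩_ν`.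
-/

noncomputable section

/-- Inner product `⟨f,g⟩_ν = Σ_x f(x) g(x) ν(x)`. -/
def ipNu {S : Type*} [Fintype S] (ν f g : S → ℝ) : ℝ := ∑ x, f x * g x * ν x

open Matrix Filter Topology

section

variable {n : Type*} [Fintype n]

theorem mulVec_div_eq_smul_of_vecMul_eq_smul {ν a : n → ℝ} {M : Matrix n n ℝ} {m : ℝ}
    (hν : ∀ x, ν x ≠ 0) (hM : ∀ x y, ν x * M x y = ν y * M y x) (ha : a ᵥ* M = m • a) :
    M *ᵥ (a / ν) = m • (a / ν) := by
  funext x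
  have hx : ∑ y, a y * M y x = m * a x := congrFun ha x
  simp only [mulVec, dotProduct, Pi.div_apply, Pi.smul_apply, smul_eq_mul, ← mul_div_assoc,
    ← hx, Finset.sum_div]
  refine Finset.sum_congr rfl fun y _ => ?_
  rw [div_eq_div_iff (hν y) (hν x)]
  linear_combination a y * hM x y

theorem tendsto_dotProduct_mulVec_div {α : Type*} {l : Filter α} {X : α → Matrix n n ℝ}
    {c : α → ℝ} {Q : Matrix n n ℝ} (hc : ∀ t, c t ≠ 0) (hX : Tendsto (fun t => c t • X t) l (𝓝 Q))
    (p f g : n → ℝ) (hg : p ⬝ᵥ Q *ᵥ g ≠ 0) :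
    Tendsto (fun t => (p ⬝ᵥ X t *ᵥ f) / (p ⬝ᵥ X t *ᵥ g)) l
      (𝓝 ((p ⬝ᵥ Q *ᵥ f) / (p ⬝ᵥ Q *ᵥ g))) := by
  have hcont : ∀ h : n → ℝ, Continuous fun Y : Matrix n n ℝ => p ⬝ᵥ Y *ᵥ h := fun h =>
    continuous_const.dotProduct (continuous_id.matrix_mulVec continuous_const)
  refine (((hcont f).tendsto Q).comp hX |>.div (((hcont g).tendsto Q).comp hX) hg).congr
    fun t => ?_
  simp only [Pi.div_apply, Function.comp_apply, smul_mulVec, dotProduct_smul, smul_eq_mul]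
  exact mul_div_mul_left _ _ (hc t)

theorem Real.tendsto_exp_mul_sub_of_le {a b : ℝ} (hab : a ≤ b) :
    Tendsto (fun t => Real.exp (t * (a - b))) atTop (𝓝 (if a = b then 1 else 0)) := by
  split_ifs with h
  · simp [h]
  · exact Real.tendsto_exp_atBot.comp
      (tendsto_id.atTop_mul_const_of_neg (sub_neg.2 (lt_of_le_of_ne hab h)))

section

variable [DecidableEq n]

def Matrix.diagonalUnits (s : n → ℝ) (hs : ∀ x, s x ≠ 0) : (Matrix n n ℝ)ˣ where
  val := diagonal s
  inv := diagonal s⁻¹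
  val_inv := by simp [diagonal_mul_diagonal, hs]
  inv_val := by simp [diagonal_mul_diagonal, hs]

theorem exists_units_conj_diagonal_of_reversible {ν : n → ℝ} {M : Matrix n n ℝ}
    (hν : ∀ x, 0 < ν x) (hM : ∀ x y, ν x * M x y = ν y * M y x) :
    ∃ (P : (Matrix n n ℝ)ˣ) (μ : n → ℝ), M = P.val * diagonal μ * P⁻¹.val := by
  have hs : ∀ x, √(ν x) ≠ 0 := fun x => (Real.sqrt_pos.2 (hν x)).ne'
  set D := diagonalUnits (fun x => √(ν x)) hs
  have hA : (D * M * D⁻¹.val).IsHermitian := by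
    refine IsHermitian.ext fun x y => ?_
    have hνx := Real.mul_self_sqrt (hν x).le
    have hνy := Real.mul_self_sqrt (hν y).le
    simp only [D, diagonalUnits, Units.inv_mk, diagonal_mul, mul_diagonal, star_trivial,
      Pi.inv_apply]
    rw [← div_eq_mul_inv, ← div_eq_mul_inv, div_eq_div_iff (hs x) (hs y)]
    linear_combination hM y x + M y x * hνy - M x y * hνx
  refine ⟨D⁻¹ * Unitary.toUnits hA.eigenvectorUnitary, hA.eigenvalues, ?_⟩
  have hspec := hA.spectral_theorem
  rw [Unitary.conjStarAlgAut_apply, RCLike.ofReal_real_eq_id, Function.id_comp] at hspec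
  calc M = D⁻¹.val * (D * M * D⁻¹.val) * D := by simp [mul_assoc]
    _ = _ := by
      conv_lhs => rw [hspec]
      simp [mul_assoc]

theorem Matrix.exp_smul_units_conj_diagonal (P : (Matrix n n ℝ)ˣ) (μ : n → ℝ) (t : ℝ) :
    NormedSpace.exp (t • (P.val * diagonal μ * P⁻¹.val)) =
      P.val * diagonal (fun j => Real.exp (t * μ j)) * P⁻¹.val := by
  rw [← smul_mul_assoc, ← mul_smul_comm, ← diagonal_smul, Matrix.exp_units_conj, exp_diagonal,
    Pi.exp_def]
  simp only [Pi.smul_apply, smul_eq_mul, ← Real.exp_eq_exp_ℝ]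

def eigenProj (P : (Matrix n n ℝ)ˣ) (μ : n → ℝ) (m : ℝ) : Matrix n n ℝ :=
  P.val * diagonal (fun j => if μ j = m then 1 else 0) * P⁻¹.val

section eigenProj

variable (P : (Matrix n n ℝ)ˣ) (μ : n → ℝ) (m : ℝ)

theorem diagonal_mul_diagonal_ite_eq_smul :
    diagonal μ * diagonal (fun j => if μ j = m then 1 else 0) =
      m • diagonal (fun j => if μ j = m then (1 : ℝ) else 0) := by
  rw [diagonal_mul_diagonal, ← diagonal_smul]
  congr 1
  funext j
  split_ifs with h <;> simp [h]

theorem units_conj_diagonal_mul_eigenProj :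
    P.val * diagonal μ * P⁻¹.val * eigenProj P μ m = m • eigenProj P μ m := by
  simp only [eigenProj, mul_assoc, Units.inv_mul_cancel_left]
  rw [← mul_assoc (diagonal μ), diagonal_mul_diagonal_ite_eq_smul]
  simp

theorem eigenProj_mul_units_conj_diagonal :
    eigenProj P μ m * (P.val * diagonal μ * P⁻¹.val) = m • eigenProj P μ m := by
  simp only [eigenProj, mul_assoc, Units.inv_mul_cancel_left]
  rw [← mul_assoc _ (diagonal μ), ← (commute_diagonal _ _).eq, diagonal_mul_diagonal_ite_eq_smul]
  simp

theorem eigenProj_mulVec_of_mulVec_eq_smul {v : n → ℝ}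
    (hv : (P.val * diagonal μ * P⁻¹.val) *ᵥ v = m • v) : eigenProj P μ m *ᵥ v = v := by
  set z := P⁻¹.val *ᵥ v
  have hz : diagonal μ *ᵥ z = m • z := by
    have := congrArg (P⁻¹.val *ᵥ ·) hv
    simp only [mulVec_mulVec, ← mul_assoc, Units.inv_mul, one_mul, mulVec_smul] at this
    rwa [← mulVec_mulVec] at this
  have hEz : diagonal (fun j => if μ j = m then 1 else 0) *ᵥ z = z := by
    funext j
    have hzj : μ j * z j = m * z j := by
      simpa only [mulVec_diagonal, Pi.smul_apply, smul_eq_mul] using congrFun hz j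
    rw [mulVec_diagonal]
    split_ifs with h
    · exact one_mul _
    · rw [zero_mul, (mul_eq_mul_right_iff.1 hzj).resolve_left h]
  rw [eigenProj, ← mulVec_mulVec, ← mulVec_mulVec, hEz, mulVec_mulVec, Units.mul_inv, one_mulVec]

theorem units_conj_diagonal_mulVec_col (j : n) :
    (P.val * diagonal μ * P⁻¹.val) *ᵥ P.val.col j = μ j • P.val.col j := by
  rw [← mulVec_single_one, mulVec_mulVec, Units.inv_mul_cancel_right, ← mulVec_mulVec,
    diagonal_mulVec_single, ← smul_eq_mul, Pi.single_smul', mulVec_smul]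

theorem units_col_ne_zero (j : n) : P.val.col j ≠ 0 := by
  intro h
  have := congrArg (P⁻¹.val *ᵥ ·) h
  simp only [← mulVec_single_one, mulVec_mulVec, Units.inv_mul, one_mulVec, mulVec_zero] at this
  simpa using congrFun this j

end eigenProj

theorem tendsto_exp_smul_units_conj_diagonal (P : (Matrix n n ℝ)ˣ) {μ : n → ℝ} {m : ℝ}
    (hμ : ∀ j, μ j ≤ m) :
    Tendsto (fun t : ℝ => Real.exp (-(m * t)) •
        NormedSpace.exp (t • (P.val * diagonal μ * P⁻¹.val))) atTop (𝓝 (eigenProj P μ m)) := by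
  have hdiag : Tendsto (fun t : ℝ => diagonal fun j => Real.exp (t * (μ j - m))) atTop
      (𝓝 (diagonal fun j => if μ j = m then 1 else 0)) := by
    refine (continuous_id.matrix_diagonal.tendsto _).comp (tendsto_pi_nhds.2 fun j => ?_)
    exact Real.tendsto_exp_mul_sub_of_le (hμ j)
  have hconj : Continuous fun X : Matrix n n ℝ => P.val * X * P⁻¹.val :=
    (continuous_const.matrix_mul continuous_id).matrix_mul continuous_const
  refine ((hconj.tendsto _).comp hdiag).congr fun t => ?_
  rw [Function.comp_apply, Matrix.exp_smul_units_conj_diagonal, ← smul_mul_assoc,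
    ← mul_smul_comm, ← diagonal_smul]
  congr 3
  funext j
  rw [Pi.smul_apply, smul_eq_mul, ← Real.exp_add]
  congr 1
  ring

theorem mulVec_eq_ipNu_smul_of_mul_eq_smul {ν u : n → ℝ} {M Q : Matrix n n ℝ} {m : ℝ}
    (hν : ∀ x, ν x ≠ 0) (hM : ∀ x y, ν x * M x y = ν y * M y x) (hu : u ≠ 0)
    (hsimple : ∀ v, M *ᵥ v = m • v → ∃ c : ℝ, v = c • u)
    (hMQ : M * Q = m • Q) (hQM : Q * M = m • Q) (hQu : Q *ᵥ u = u) (f : n → ℝ) :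
    Q *ᵥ f = (ipNu ν f u / ipNu ν u u) • u := by
  choose c hc using fun f => hsimple (Q *ᵥ f) (by rw [mulVec_mulVec, hMQ, smul_mulVec])
  set a : n → ℝ := fun y => c (Pi.single y 1)
  have hQ : ∀ x y, Q x y = a y * u x := fun x y => by
    simpa [mulVec_single_one] using congrFun (hc (Pi.single y 1)) x
  obtain ⟨x₀, hx₀⟩ := Function.ne_iff.1 hu
  have ha : a ᵥ* M = m • a := by
    funext z
    have := congrFun (congrFun hQM x₀) z
    simp only [mul_apply, hQ, Matrix.smul_apply, smul_eq_mul] at this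
    apply mul_right_cancel₀ hx₀
    simp only [vecMul, dotProduct, Pi.smul_apply, smul_eq_mul, Finset.sum_mul, mul_assoc, ← this]
    exact Finset.sum_congr rfl fun y _ => by ring
  obtain ⟨k, hk⟩ := hsimple _ (mulVec_div_eq_smul_of_vecMul_eq_smul hν hM ha)
  have hQf : ∀ f, Q *ᵥ f = (k * ipNu ν f u) • u := by
    intro f
    funext x
    have ha' : ∀ y, a y = k * u y * ν y := fun y => by
      have := congrFun hk y
      simp only [Pi.div_apply, Pi.smul_apply, smul_eq_mul] at this
      rw [div_eq_iff (hν y)] at this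
      exact this
    simp only [mulVec, dotProduct, hQ, ha', ipNu, Pi.smul_apply, smul_eq_mul, Finset.mul_sum,
      Finset.sum_mul]
    refine Finset.sum_congr rfl fun y _ => by ring
  have hk1 : k * ipNu ν u u = 1 := by
    rw [hQf] at hQu
    exact smul_left_injective ℝ hu (hQu.trans (one_smul ℝ u).symm)
  rw [hQf]
  congr 1
  exact eq_div_of_mul_eq (right_ne_zero_of_mul_eq_one hk1)
    (by linear_combination ipNu ν f u * hk1)

end

end

theorem conditioned_law_limit_general
    {S : Type*} [Fintype S] [DecidableEq S]
    (ν : S → ℝ) (hν : ∀ x, 0 < ν x)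
    (M : Matrix S S ℝ)
    (hM_symm : ∀ x y, ν x * M x y = ν y * M y x)
    (lam : ℝ)
    (u : S → ℝ) (hu : ∀ x, 0 < u x)
    (heig : M.mulVec u = (-lam) • u)
    (hsimple : ∀ v : S → ℝ, M.mulVec v = (-lam) • v → ∃ c : ℝ, v = c • u)
    (hdom : ∀ (c : ℝ) (v : S → ℝ), v ≠ 0 → M.mulVec v = c • v → c ≤ -lam)
    (p : S → ℝ) (hp : ∀ x, 0 ≤ p x) (hp0 : p ≠ 0) (g : S → ℝ) :
    Filter.Tendsto
      (fun t : ℝ =>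
        (∑ x, p x * (NormedSpace.exp (t • M)).mulVec g x) /
          (∑ x, p x * (NormedSpace.exp (t • M)).mulVec (fun _ => 1) x))
      Filter.atTop
      (nhds (ipNu ν g u / ipNu ν (fun _ => 1) u)) := by
  obtain ⟨P, μ, rfl⟩ := exists_units_conj_diagonal_of_reversible hν hM_symm
  have hμ : ∀ j, μ j ≤ -lam := fun j =>
    hdom _ _ (units_col_ne_zero P j) (units_conj_diagonal_mulVec_col P μ j)
  obtain ⟨x₀, hx₀⟩ := Function.ne_iff.1 hp0
  have hpu : 0 < p ⬝ᵥ u := Finset.sum_pos' (fun x _ => mul_nonneg (hp x) (hu x).le)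
    ⟨x₀, Finset.mem_univ _, mul_pos ((hp x₀).lt_of_ne' hx₀) (hu x₀)⟩
  have hipNu_pos : ∀ f : S → ℝ, (∀ x, 0 < f x) → 0 < ipNu ν f u := fun f hf =>
    Finset.sum_pos (fun x _ => mul_pos (mul_pos (hf x) (hu x)) (hν x)) ⟨x₀, Finset.mem_univ _⟩
  have h1u := hipNu_pos _ fun _ => one_pos
  have huu := hipNu_pos u hu
  have hproj := mulVec_eq_ipNu_smul_of_mul_eq_smul (fun x => (hν x).ne') hM_symm
    (fun h => (hu x₀).ne' (congrFun h x₀)) hsimple (units_conj_diagonal_mul_eigenProj P μ _)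
    (eigenProj_mul_units_conj_diagonal P μ _) (eigenProj_mulVec_of_mulVec_eq_smul P μ _ heig)
  have hlim := tendsto_dotProduct_mulVec_div (fun t => (Real.exp_pos _).ne')
    (tendsto_exp_smul_units_conj_diagonal P hμ) p g (fun _ => 1)
    (by
      rw [hproj, dotProduct_smul, smul_eq_mul]
      exact mul_ne_zero (div_ne_zero h1u.ne' huu.ne') hpu.ne')
  rw [hproj, hproj, dotProduct_smul, dotProduct_smul, smul_eq_mul, smul_eq_mul] at hlim
  rwa [mul_div_mul_right _ _ hpu.ne', div_div_div_cancel_right₀ huu.ne'] at hlim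

/-- **Finite-state version of Proposition 1.8(ii).**
For every nonzero `p : S → [0,∞)` and every `g : S → ℝ`, the conditioned law at
time `t` started from `p` converges: `[Σ_x p(x)(e^{tM}g)(x)] / [Σ_x p(x)(e^{tM}1)(x)]
→ ⟨g,u⟩_ν / ⟨1,u⟩_ν` as `t → ∞`. -/
theorem conditioned_law_limit
    {S : Type*} [Fintype S] [DecidableEq S] [Nonempty S]
    (ν : S → ℝ) (hν : ∀ x, 0 < ν x)
    (M : Matrix S S ℝ)
    (hM_offdiag : ∀ x y, x ≠ y → 0 ≤ M x y)
    (hM_row : ∀ x, ∑ y, M x y ≤ 0)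
    (hM_symm : ∀ x y, ν x * M x y = ν y * M y x)
    (lam : ℝ) (hlam : 0 < lam)
    (u : S → ℝ) (hu : ∀ x, 0 < u x)
    (heig : M.mulVec u = (-lam) • u)
    (hsimple : ∀ v : S → ℝ, M.mulVec v = (-lam) • v → ∃ c : ℝ, v = c • u)
    (hdom : ∀ (c : ℝ) (v : S → ℝ), v ≠ 0 → M.mulVec v = c • v → c ≤ -lam)
    (p : S → ℝ) (hp : ∀ x, 0 ≤ p x) (hp0 : p ≠ 0) (g : S → ℝ) :
    Filter.Tendsto
      (fun t : ℝ =>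
        (∑ x, p x * (NormedSpace.exp (t • M)).mulVec g x) /
          (∑ x, p x * (NormedSpace.exp (t • M)).mulVec (fun _ => 1) x))
      Filter.atTop
      (nhds (ipNu ν g u / ipNu ν (fun _ => 1) u)) :=
  conditioned_law_limit_general ν hν M hM_symm lam u hu heig hsimple hdom p hp hp0 g
end
end
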